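/- Let b be a coefficient sequence with b₀ ≠ 0, so that b is invertible in the ψ-ring of Ward, and let b⁻¹ denote its inverse with respect to the Ward product. Then the ψ-derivative of the reciprocal satisfies D(b⁻¹) = −b⁻¹·(b⁻¹ ∗_{1,0} D b). -/

import Mathlib

open Finset

/-- The ψ-factorial: ψₙ! = ψ₁ψ₂⋯ψₙ, with ψ₀! = 1. -/
noncomputable def psiFact (ψ : ℕ → ℂ) : ℕ → ℂ
  | 0 => 1
  | n + 1 => psiFact ψ n * ψ (n + 1)

/-- The ψ-binomial coefficient binomψ(n,k) = ψₙ!/(ψₖ!·ψ_{n−k}!). -/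
noncomputable def psiBinom (ψ : ℕ → ℂ) (n k : ℕ) : ℂ :=
  psiFact ψ n / (psiFact ψ k * psiFact ψ (n - k))

/-- The Fontané numbers F(n,k) = (ψₙ − ψₖ)/ψ_{n−k}. -/
noncomputable def Fker (ψ : ℕ → ℂ) (n k : ℕ) : ℂ :=
  (ψ n - ψ k) / ψ (n - k)

/-- The Ward product of coefficient sequences. -/
noncomputable def wardMul (ψ : ℕ → ℂ) (a b : ℕ → ℂ) (n : ℕ) : ℂ :=
  ∑ k ∈ Finset.range (n + 1), psiBinom ψ n k * a k * b (n - k)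

/-- The Fontané product ∗_{i,j} of coefficient sequences. -/
noncomputable def fontane (ψ : ℕ → ℂ) (i j : ℕ) (a b : ℕ → ℂ) (n : ℕ) : ℂ :=
  ∑ k ∈ Finset.range (n + 1), Fker ψ (n + i) (k + j) * psiBinom ψ n k * a k * b (n - k)

/-- The ψ-derivative on coefficient sequences: the shift (D a)ₙ = a_{n+1}. -/
def Dpsi (a : ℕ → ℂ) (n : ℕ) : ℂ := a (n + 1)

/-! The map `a ↦ ∑ aₙ xⁿ / ψₙ!` is an injective ring homomorphism from the Ward ring into
`ℂ⟦X⟧`, so the Ward ring is commutative and `b⁻¹` is a two-sided inverse of `b`. The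
ψ-Pascal rule `binomψ(n+1,k+1) = binomψ(n,k) + F(n+1,k+1) binomψ(n,k+1)` gives the Leibniz rule
`D(a·b) = Da·b + a ∗_{1,0} Db`; applied to `b⁻¹·b = δ` it yields `Db⁻¹·b = -(b⁻¹ ∗_{1,0} Db)`,
and multiplying by `b⁻¹` gives the claim. -/

section

variable {ψ : ℕ → ℂ}

lemma psiFact_ne_zero (hψ : ∀ n : ℕ, 1 ≤ n → ψ n ≠ 0) (n : ℕ) : psiFact ψ n ≠ 0 := by
  induction n with
  | zero => simp [psiFact]
  | succ n ih => exact mul_ne_zero ih (hψ (n + 1) n.succ_pos)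

lemma psiBinom_zero_right (hψ : ∀ n : ℕ, 1 ≤ n → ψ n ≠ 0) (n : ℕ) : psiBinom ψ n 0 = 1 := by
  simp [psiBinom, psiFact, psiFact_ne_zero hψ]

lemma Fker_self (n : ℕ) : Fker ψ n n = 0 := by
  simp [Fker]

lemma Fker_zero_right (hψ0 : ψ 0 = 0) (hψ : ∀ n : ℕ, 1 ≤ n → ψ n ≠ 0) (n : ℕ) :
    Fker ψ (n + 1) 0 = 1 := by
  simp [Fker, hψ0, hψ (n + 1) n.succ_pos]

lemma psiBinom_succ_succ (hψ : ∀ n : ℕ, 1 ≤ n → ψ n ≠ 0) {n k : ℕ} (hk : k ≤ n) :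
    psiBinom ψ (n + 1) (k + 1)
      = psiBinom ψ n k + Fker ψ (n + 1) (k + 1) * psiBinom ψ n (k + 1) := by
  obtain ⟨m, rfl⟩ := Nat.exists_eq_add_of_le hk
  have hf := psiFact_ne_zero hψ
  rcases m with _ | m
  · simp [psiBinom, Fker, psiFact, hf, hψ (k + 1) k.succ_pos]
  · have hkm : k + (m + 1) + 1 - (k + 1) = m + 1 := by omega
    have hk1 : k + (m + 1) - (k + 1) = m := by omega
    simp only [psiBinom, Fker, hkm, hk1, Nat.add_sub_cancel_left, psiFact]
    have := hψ (k + 1) k.succ_pos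
    have := hψ (m + 1) m.succ_pos
    field_simp [hf k, hf m]
    ring

theorem Dpsi_wardMul (hψ0 : ψ 0 = 0) (hψ : ∀ n : ℕ, 1 ≤ n → ψ n ≠ 0) (a b : ℕ → ℂ) (n : ℕ) :
    Dpsi (wardMul ψ a b) n = wardMul ψ (Dpsi a) b n + fontane ψ 1 0 a (Dpsi b) n := by
  have hpascal : ∀ i ∈ range (n + 1), psiBinom ψ (n + 1) (i + 1) * a (i + 1) * b (n + 1 - (i + 1))
      = psiBinom ψ n i * a (i + 1) * b (n - i)
        + Fker ψ (n + 1) (i + 1) * psiBinom ψ n (i + 1) * a (i + 1) * b (n - (i + 1) + 1) := by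
    intro i hi
    have hi : i ≤ n := Nat.lt_succ_iff.mp (mem_range.mp hi)
    rw [psiBinom_succ_succ hψ hi, Nat.add_sub_add_right]
    rcases hi.eq_or_lt with rfl | hlt
    · simp [Fker_self]
    · rw [show n - (i + 1) + 1 = n - i by omega]
      ring
  simp only [Dpsi, wardMul, fontane]
  rw [sum_range_succ' _ (n + 1), sum_congr rfl hpascal, sum_add_distrib,
    sum_range_succ (fun i => Fker ψ (n + 1) (i + 1) * psiBinom ψ n (i + 1) * a (i + 1)
      * b (n - (i + 1) + 1)) n,
    sum_range_succ' (fun k => Fker ψ (n + 1) (k + 0) * psiBinom ψ n k * a k * b (n - k + 1)) n]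
  simp only [Fker_self, Fker_zero_right hψ0 hψ, psiBinom_zero_right hψ, Nat.sub_zero]
  ring

noncomputable def wardEGF (ψ : ℕ → ℂ) (a : ℕ → ℂ) : PowerSeries ℂ :=
  PowerSeries.mk fun n => a n / psiFact ψ n

lemma wardEGF_injective (hψ : ∀ n : ℕ, 1 ≤ n → ψ n ≠ 0) : Function.Injective (wardEGF ψ) := by
  intro a b h
  funext n
  have hn := congrArg (PowerSeries.coeff n) h
  simpa [wardEGF, psiFact_ne_zero hψ n] using hn

lemma wardEGF_wardMul (hψ : ∀ n : ℕ, 1 ≤ n → ψ n ≠ 0) (a b : ℕ → ℂ) :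
    wardEGF ψ (wardMul ψ a b) = wardEGF ψ a * wardEGF ψ b := by
  ext n
  rw [PowerSeries.coeff_mul, Nat.sum_antidiagonal_eq_sum_range_succ_mk]
  simp only [wardEGF, PowerSeries.coeff_mk, wardMul, sum_div, psiBinom]
  refine sum_congr rfl fun k _ => ?_
  have := psiFact_ne_zero hψ n
  have := psiFact_ne_zero hψ k
  have := psiFact_ne_zero hψ (n - k)
  field_simp

lemma wardEGF_delta : wardEGF ψ (fun n => if n = 0 then 1 else 0) = 1 := by
  ext (_ | n) <;> simp [wardEGF, psiFact, PowerSeries.coeff_one]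

lemma wardEGF_neg (a : ℕ → ℂ) : wardEGF ψ (-a) = -wardEGF ψ a := by
  ext n
  simp [wardEGF, neg_div]

lemma wardMul_comm (hψ : ∀ n : ℕ, 1 ≤ n → ψ n ≠ 0) (a b : ℕ → ℂ) :
    wardMul ψ a b = wardMul ψ b a :=
  wardEGF_injective hψ <| by rw [wardEGF_wardMul hψ, wardEGF_wardMul hψ, mul_comm]

end

theorem Dpsi_reciprocal_general (ψ : ℕ → ℂ) (hψ0 : ψ 0 = 0) (hψ : ∀ n : ℕ, 1 ≤ n → ψ n ≠ 0)
    (b binv : ℕ → ℂ)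
    (hinv : wardMul ψ b binv = fun n => if n = 0 then 1 else 0) :
    Dpsi binv
      = fun n => -(wardMul ψ binv (fontane ψ 1 0 binv (Dpsi b)) n) := by
  have hunit : wardEGF ψ b * wardEGF ψ binv = 1 := by
    rw [← wardEGF_wardMul hψ, hinv, wardEGF_delta]
  have hleibniz : wardMul ψ (Dpsi binv) b = -fontane ψ 1 0 binv (Dpsi b) := by
    funext n
    have h := Dpsi_wardMul hψ0 hψ binv b n
    rw [wardMul_comm hψ, hinv] at h
    simp only [Dpsi, Nat.add_one_ne_zero, if_false] at h
    exact eq_neg_of_add_eq_zero_left h.symm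
  apply wardEGF_injective hψ
  change wardEGF ψ (Dpsi binv) = wardEGF ψ (-wardMul ψ binv (fontane ψ 1 0 binv (Dpsi b)))
  calc wardEGF ψ (Dpsi binv)
      = wardEGF ψ (Dpsi binv) * wardEGF ψ b * wardEGF ψ binv := by
        rw [mul_assoc, hunit, mul_one]
    _ = -(wardEGF ψ binv * wardEGF ψ (fontane ψ 1 0 binv (Dpsi b))) := by
      rw [← wardEGF_wardMul hψ, hleibniz, wardEGF_neg, neg_mul, mul_comm]
    _ = wardEGF ψ (-wardMul ψ binv (fontane ψ 1 0 binv (Dpsi b))) := by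
      rw [wardEGF_neg, wardEGF_wardMul hψ]

/-- The reciprocal ψ-rule: D(b⁻¹) = −b⁻¹·(b⁻¹ ∗_{1,0} D b). -/
theorem Dpsi_reciprocal (ψ : ℕ → ℂ) (hψ0 : ψ 0 = 0) (hψ1 : ψ 1 = 1) (hψ : ∀ n : ℕ, 1 ≤ n → ψ n ≠ 0)
    (b binv : ℕ → ℂ) (hb : b 0 ≠ 0)
    (hinv : wardMul ψ b binv = fun n => if n = 0 then 1 else 0) :
    Dpsi binv
      = fun n => -(wardMul ψ binv (fontane ψ 1 0 binv (Dpsi b)) n) :=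
  Dpsi_reciprocal_general ψ hψ0 hψ b binv hinv
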